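/- arXiv:1707.02440 — 9 statements merged into one kernel-verified Lean document; each statement's English description precedes it below -/
import Mathlib

section
/- For every integer x ≥ 1, every real q with 0 < q ≤ 1, and every real a > 0, the exponential moment of the departure count satisfies: ∑_{d=0}^{x} (x choose d)(q/x)^d (1 - q/x)^{x-d} · exp(-a·d) ≤ 1 - (q/2)(1 - exp(-a)). -/
open Finset in
/-- For every integer `x ≥ 1`, every real `q ∈ (0,1]` and every `a > 0`, the exponential
moment of the egalitarian processor-sharing departure count `D ~ Bin(x, q/x)` satisfies
`E[exp(-a D)] ≤ 1 - (q/2)(1 - exp(-a))`. -/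
theorem departure_exp_moment_bound (x : ℕ) (hx : 1 ≤ x) (q : ℝ) (hq0 : 0 < q) (hq1 : q ≤ 1)
    (a : ℝ) (ha : 0 < a) :
    ∑ d ∈ Finset.range (x + 1),
      (x.choose d : ℝ) * (q / x) ^ d * (1 - q / x) ^ (x - d) * Real.exp (-a * d)
    ≤ 1 - q / 2 * (1 - Real.exp (-a)) := by
  have hx' : (1:ℝ) ≤ (x:ℝ) := by exact_mod_cast hx
  have hxpos : (0:ℝ) < (x:ℝ) := by linarith
  set p : ℝ := q / x with hp
  set t : ℝ := 1 - Real.exp (-a) with htdef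
  have ht0 : 0 < t := by
    have : Real.exp (-a) < 1 := Real.exp_lt_one_iff.mpr (by linarith)
    simp only [htdef]; linarith
  have ht1 : t ≤ 1 := by
    have := Real.exp_pos (-a); simp only [htdef]; linarith
  -- binomial theorem
  have key : ∑ d ∈ Finset.range (x + 1),
      (x.choose d : ℝ) * p ^ d * (1 - p) ^ (x - d) * Real.exp (-a * d)
      = (1 - p * t) ^ x := by
    have h1 : 1 - p * t = p * Real.exp (-a) + (1 - p) := by
      simp only [htdef]; ring
    rw [h1, add_pow]
    apply Finset.sum_congr rfl
    intro d _
    rw [show (-a * (d:ℝ)) = (d:ℝ) * (-a) by ring, Real.exp_nat_mul, mul_pow]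
    ring
  rw [key]
  -- set s = q * t
  set s : ℝ := q * t with hs
  have hs0 : 0 < s := mul_pos hq0 ht0
  have hs1 : s ≤ 1 := by
    calc s ≤ 1 * 1 := mul_le_mul hq1 ht1 (le_of_lt ht0) (by norm_num)
    _ = 1 := by norm_num
  have hpt : p * t = s / x := by rw [hp, hs]; ring
  rw [hpt]
  have hnonneg : 0 ≤ 1 - s / x := by
    have : s / x ≤ 1 := by rw [div_le_one hxpos]; linarith
    linarith
  have step1 : (1 - s / x) ^ x ≤ Real.exp (-s) := by
    have h1 : 1 - s / x ≤ Real.exp (-(s / x)) := by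
      have := Real.add_one_le_exp (-(s / x)); linarith
    calc (1 - s / x) ^ x ≤ (Real.exp (-(s / x))) ^ x :=
          pow_le_pow_left₀ hnonneg h1 x
      _ = Real.exp ((x:ℝ) * (-(s / x))) := (Real.exp_nat_mul _ x).symm
      _ = Real.exp (-s) := by
          congr 1; field_simp
  have step2 : Real.exp (-s) ≤ 1 - s / 2 := by
    have h1 : 1 + s ≤ Real.exp s := by
      have := Real.add_one_le_exp s; linarith
    have hpos : (0:ℝ) < 1 + s := by linarith
    have h2 : Real.exp (-s) ≤ 1 / (1 + s) := by
      rw [Real.exp_neg, one_div]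
      exact inv_anti₀ hpos h1
    have h3 : 1 / (1 + s) ≤ 1 - s / 2 := by
      rw [div_le_iff₀ hpos]
      nlinarith
    linarith
  have : 1 - s / 2 = 1 - q / 2 * t := by rw [hs]; ring
  linarith
end

section
/- Let p, q ∈ (0,1) and a > 0 satisfy p(e^a - 1) < (q/2)(1 - e^{-a}), and set b := (q/2)(1 - e^{-a}) - p(e^a - 1) > 0. Then for every integer x ≥ 1 and every ν ∈ {0,1}, the one-step expected value of the Lyapunov function e^{a·(queue length)} satisfies the drift inequality: ∑_{d=0}^{x} (x choose d)(q/x)^d (1 - q/x)^{x-d} · ( p·exp(a(x - d + ν)) + (1 - p)·exp(a(x - d)) ) ≤ (1 - b)·exp(a·x). -/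
open Finset in
set_option maxHeartbeats 1000000 in
/-- Drift inequality for the Lyapunov function `e^{a·(queue length)}`: if
`p(e^a - 1) < (q/2)(1 - e^{-a})` and `b` is the gap, then for every `x ≥ 1` and every
control `ν ∈ {0,1}`, the one-step expected value of `exp(a·(x - D + ν·ξ))` is at most
`(1 - b)·exp(a x)`. -/
theorem lyapunov_drift (p q a b : ℝ) (hp0 : 0 < p) (hp1 : p < 1) (hq0 : 0 < q) (hq1 : q < 1)
    (ha : 0 < a) (hdrift : p * (Real.exp a - 1) < q / 2 * (1 - Real.exp (-a)))
    (hb : b = q / 2 * (1 - Real.exp (-a)) - p * (Real.exp a - 1))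
    (x : ℕ) (hx : 1 ≤ x) (ν : ℕ) (hν : ν = 0 ∨ ν = 1) :
    ∑ d ∈ Finset.range (x + 1),
      (x.choose d : ℝ) * (q / x) ^ d * (1 - q / x) ^ (x - d) *
        (p * Real.exp (a * ((x - d + ν : ℕ) : ℝ)) + (1 - p) * Real.exp (a * ((x - d : ℕ) : ℝ)))
    ≤ (1 - b) * Real.exp (a * x) := by
  set E := Real.exp a with hE
  set Ei := Real.exp (-a) with hEi
  have hEEi : E * Ei = 1 := by rw [hE, hEi, ← Real.exp_add]; simp
  have hE1 : 1 < E := by nlinarith [Real.add_one_le_exp a]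
  have hEi1 : Ei < 1 := by rw [hEi]; exact Real.exp_lt_one_iff.mpr (by linarith)
  have hEipos : 0 < Ei := Real.exp_pos _
  have hxpos : (0:ℝ) < (x:ℝ) := by exact_mod_cast Nat.pos_of_ne_zero (by omega)
  have hx1 : (1:ℝ) ≤ (x:ℝ) := by exact_mod_cast hx
  set t : ℝ := q / x with ht
  have ht0 : 0 < t := div_pos hq0 hxpos
  have ht1 : t < 1 := by
    rw [ht, div_lt_one hxpos]; linarith
  set c : ℝ := q * (1 - Ei) with hc
  have hc0 : 0 < c := by
    have : 0 < 1 - Ei := by linarith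
    positivity
  have hc1 : c < 1 := by
    have h1 : 1 - Ei < 1 := by linarith
    nlinarith
  -- Step 1: rewrite the sum
  have hstep1 : ∑ d ∈ Finset.range (x + 1),
      (x.choose d : ℝ) * (q / x) ^ d * (1 - q / x) ^ (x - d) *
        (p * Real.exp (a * ((x - d + ν : ℕ) : ℝ)) + (1 - p) * Real.exp (a * ((x - d : ℕ) : ℝ)))
      = (p * E ^ ν + (1 - p)) * (t + (1 - t) * E) ^ x := by
    rw [add_pow, Finset.mul_sum]
    apply Finset.sum_congr rfl
    intro d hd
    have hdx : d ≤ x := by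
      simp only [Finset.mem_range] at hd; omega
    have h1 : ((x - d + ν : ℕ) : ℝ) = ((x - d : ℕ) : ℝ) + (ν : ℕ) := by push_cast; ring
    have h2 : Real.exp (a * ((x - d : ℕ) : ℝ)) = E ^ (x - d) := by
      rw [mul_comm, Real.exp_nat_mul]
    have h3 : Real.exp (a * ((x - d + ν : ℕ) : ℝ)) = E ^ (x - d) * E ^ ν := by
      rw [h1, mul_add, Real.exp_add, h2, mul_comm a ((ν : ℕ) : ℝ), Real.exp_nat_mul]
    rw [h2, h3, mul_pow]
    ring
  rw [hstep1]
  -- Step 2: (t + (1-t)E)^x = E^x * (1 - c/x)^x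
  have hkey : t + (1 - t) * E = E * (1 - c / x) := by
    have : t + (1 - t) * E = E * (t * Ei + (1 - t)) := by
      have : E * (t * Ei) = t := by rw [← mul_assoc, mul_comm E t, mul_assoc, hEEi, mul_one]
      nlinarith [this]
    rw [this]
    congr 1
    rw [hc, ht]
    field_simp
    ring

  rw [hkey, mul_pow]
  -- Step 3: (1 - c/x)^x ≤ 1 - c/2
  have hcx0 : 0 ≤ 1 - c / x := by
    have : c / x ≤ c := by
      rw [div_le_iff₀ hxpos]; nlinarith
    linarith
  have hpow : (1 - c / x) ^ x ≤ 1 - c / 2 := by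
    have h1 : (1 - c / x) ^ x ≤ Real.exp (-c) := by
      have hle : 1 - c / x ≤ Real.exp (-(c / x)) := by
        have := Real.add_one_le_exp (-(c / x))
        linarith
      calc (1 - c / x) ^ x ≤ (Real.exp (-(c / x))) ^ x :=
            pow_le_pow_left₀ hcx0 hle x
        _ = Real.exp (-c) := by
            rw [← Real.exp_nat_mul]
            congr 1
            field_simp
    have h2 : Real.exp (-c) ≤ 1 - c + c ^ 2 / 2 := by
      have hq' := Real.quadratic_le_exp_of_nonneg hc0.le
      have hexp : Real.exp (-c) * Real.exp c = 1 := by rw [← Real.exp_add]; simp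
      have hw : (0:ℝ) < 1 + c + c ^ 2 / 2 := by positivity
      have h2a : Real.exp (-c) * (1 + c + c ^ 2 / 2) ≤ 1 := by
        calc Real.exp (-c) * (1 + c + c ^ 2 / 2) ≤ Real.exp (-c) * Real.exp c :=
              mul_le_mul_of_nonneg_left hq' (Real.exp_pos _).le
          _ = 1 := hexp
      have hprod : (1 - c + c ^ 2 / 2) * (1 + c + c ^ 2 / 2) = 1 + c ^ 4 / 4 := by ring
      nlinarith [h2a, hprod, hw, sq_nonneg c]
    have h3 : 1 - c + c ^ 2 / 2 ≤ 1 - c / 2 := by nlinarith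
    linarith [h1.trans h2]
  -- Step 4: combine
  have hEν : p * E ^ ν + (1 - p) ≤ 1 + p * (E - 1) := by
    rcases hν with rfl | rfl
    · simp; nlinarith
    · simp; nlinarith
  have hEx : E ^ x = Real.exp (a * x) := by
    rw [hE, ← Real.exp_nat_mul]; ring_nf
  have hbc : b = c / 2 - p * (E - 1) := by
    rw [hb, hc, hE]; ring
  have hExpos : 0 < Real.exp (a * x) := Real.exp_pos _
  have hfinal : (1 + p * (E - 1)) * (1 - c / 2) ≤ 1 - b := by
    rw [hbc]
    nlinarith [mul_pos (mul_pos hp0 (by linarith : (0:ℝ) < E - 1)) hc0]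
  have hEx0 : (0:ℝ) < E ^ x := pow_pos (by linarith) x
  calc (p * E ^ ν + (1 - p)) * (E ^ x * (1 - c / ↑x) ^ x)
      ≤ (1 + p * (E - 1)) * (E ^ x * (1 - c / 2)) := by
        refine mul_le_mul hEν (mul_le_mul_of_nonneg_left hpow hEx0.le) ?_ ?_
        · exact mul_nonneg hEx0.le (pow_nonneg hcx0 x)
        · nlinarith
    _ = (1 + p * (E - 1)) * (1 - c / 2) * E ^ x := by ring
    _ ≤ (1 - b) * E ^ x := mul_le_mul_of_nonneg_right hfinal hEx0.le
    _ = (1 - b) * Real.exp (a * x) := by rw [hEx]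
end

section
/- Let q ∈ (0,1] and let z, y be integers with 1 ≤ z ≤ y. Let D_z ~ Bin(z, q/z) and D_y ~ Bin(y, q/y). Then the post-departure queue length from the larger queue stochastically dominates that from the smaller queue: for every integer m, ∑_{d=0}^{z} [z - d ≥ m] · (z choose d)(q/z)^d (1 - q/z)^{z-d} ≤ ∑_{d=0}^{y} [y - d ≥ m] · (y choose d)(q/y)^d (1 - q/y)^{y-d}, where [·] denotes the indicator. -/
open Finset

/-- Binomial CDF: probability that `Bin(n,p) ≤ j`. -/
noncomputable def Fcdf (p : ℝ) (n j : ℕ) : ℝ :=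
  ∑ d ∈ Finset.range (j + 1), (n.choose d : ℝ) * p ^ d * (1 - p) ^ (n - d)

lemma Fcdf_nonneg {p : ℝ} (h0 : 0 ≤ p) (h1 : p ≤ 1) (n j : ℕ) : 0 ≤ Fcdf p n j := by
  have h1' : 0 ≤ 1 - p := by linarith
  exact Finset.sum_nonneg fun d _ => by positivity

lemma Fcdf_mono_j {p : ℝ} (h0 : 0 ≤ p) (h1 : p ≤ 1) (n j : ℕ) :
    Fcdf p n j ≤ Fcdf p n (j + 1) := by
  have h1' : 0 ≤ 1 - p := by linarith
  apply Finset.sum_le_sum_of_subset_of_nonneg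
  · exact Finset.range_subset_range.mpr (by omega)
  · intro d _ _; positivity

lemma Fcdf_zero (p : ℝ) (j : ℕ) : Fcdf p 0 j = 1 := by
  induction j with
  | zero => simp [Fcdf]
  | succ j ih =>
    have h : Fcdf p 0 (j + 1) = Fcdf p 0 j
        + (Nat.choose 0 (j + 1) : ℝ) * p ^ (j + 1) * (1 - p) ^ (0 - (j + 1)) :=
      Finset.sum_range_succ _ _
    rw [h, Nat.choose_eq_zero_of_lt (by omega), ih]
    simp

lemma Fcdf_j0 (p : ℝ) (n : ℕ) : Fcdf p n 0 = (1 - p) ^ n := by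
  simp [Fcdf]

lemma Fcdf_succ (p : ℝ) (n j : ℕ) :
    Fcdf p (n + 1) (j + 1) = p * Fcdf p n j + (1 - p) * Fcdf p n (j + 1) := by
  have L : Fcdf p (n + 1) (j + 1)
      = (∑ i ∈ Finset.range (j + 1),
          ((n + 1).choose (i + 1) : ℝ) * p ^ (i + 1) * (1 - p) ^ (n + 1 - (i + 1)))
        + (1 - p) ^ (n + 1) := by
    unfold Fcdf
    rw [Finset.sum_range_succ'
      (fun d => ((n + 1).choose d : ℝ) * p ^ d * (1 - p) ^ (n + 1 - d)) (j + 1)]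
    simp
  have R : Fcdf p n (j + 1)
      = (∑ i ∈ Finset.range (j + 1),
          (n.choose (i + 1) : ℝ) * p ^ (i + 1) * (1 - p) ^ (n - (i + 1)))
        + (1 - p) ^ n := by
    unfold Fcdf
    rw [Finset.sum_range_succ'
      (fun d => (n.choose d : ℝ) * p ^ d * (1 - p) ^ (n - d)) (j + 1)]
    simp
  have key : ∀ i ∈ Finset.range (j + 1),
      ((n + 1).choose (i + 1) : ℝ) * p ^ (i + 1) * (1 - p) ^ (n + 1 - (i + 1))
      = p * ((n.choose i : ℝ) * p ^ i * (1 - p) ^ (n - i))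
        + (1 - p) * ((n.choose (i + 1) : ℝ) * p ^ (i + 1) * (1 - p) ^ (n - (i + 1))) := by
    intro i _
    have hsub : n + 1 - (i + 1) = n - i := by omega
    rw [hsub, Nat.choose_succ_succ]
    push_cast
    by_cases h : i < n
    · have hni : n - i = n - (i + 1) + 1 := by omega
      rw [hni, pow_succ]
      ring
    · have h1 : n < i + 1 := by omega
      rw [Nat.choose_eq_zero_of_lt h1]
      have hni : n - i = 0 := by omega
      rw [hni]
      push_cast
      ring
  rw [L, Finset.sum_congr rfl key, Finset.sum_add_distrib, R]
  unfold Fcdf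
  rw [Finset.mul_sum, mul_add, Finset.mul_sum]
  ring

lemma Fcdf_step {p : ℝ} (h0 : 0 ≤ p) (h1 : p ≤ 1) (n j : ℕ) :
    Fcdf p n j ≤ Fcdf p (n + 1) (j + 1) := by
  rw [Fcdf_succ]
  nlinarith [Fcdf_mono_j h0 h1 n j]

lemma Fcdf_anti {p p' : ℝ} (h0 : 0 ≤ p') (hpp : p' ≤ p) (h1 : p ≤ 1) (n : ℕ) :
    ∀ j, Fcdf p n j ≤ Fcdf p' n j := by
  induction n with
  | zero => intro j; rw [Fcdf_zero, Fcdf_zero]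
  | succ n ih =>
    intro j
    cases j with
    | zero =>
      rw [Fcdf_j0, Fcdf_j0]
      exact pow_le_pow_left₀ (by linarith) (by linarith) _
    | succ j =>
      rw [Fcdf_succ, Fcdf_succ]
      have h0p : 0 ≤ p := le_trans h0 hpp
      have m1 : Fcdf p n j ≤ Fcdf p n (j + 1) := Fcdf_mono_j h0p h1 n j
      have i1 := ih j
      have i2 := ih (j + 1)
      nlinarith [Fcdf_nonneg h0p h1 n j, Fcdf_nonneg h0p h1 n (j + 1)]

lemma sum_eq_Fcdf (p : ℝ) (x : ℕ) (m : ℤ) (hm : m ≤ (x : ℤ)) :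
    ∑ d ∈ Finset.range (x + 1),
      (if m ≤ (x : ℤ) - d then (1 : ℝ) else 0) *
        ((x.choose d : ℝ) * p ^ d * (1 - p) ^ (x - d))
    = Fcdf p x ((x : ℤ) - m).toNat := by
  set j := ((x : ℤ) - m).toNat with hj
  set N := max x j with hN
  have hind : ∀ d : ℕ, (m ≤ (x : ℤ) - d) ↔ d ≤ j := by intro d; omega
  have lhs_eq : ∑ d ∈ Finset.range (x + 1),
      (if m ≤ (x : ℤ) - d then (1 : ℝ) else 0) *
        ((x.choose d : ℝ) * p ^ d * (1 - p) ^ (x - d))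
      = ∑ d ∈ Finset.range (N + 1),
      (if d ≤ j then (1 : ℝ) else 0) *
        ((x.choose d : ℝ) * p ^ d * (1 - p) ^ (x - d)) := by
    have e0 : ∑ d ∈ Finset.range (x + 1),
        (if m ≤ (x : ℤ) - d then (1 : ℝ) else 0) *
          ((x.choose d : ℝ) * p ^ d * (1 - p) ^ (x - d))
        = ∑ d ∈ Finset.range (x + 1),
        (if d ≤ j then (1 : ℝ) else 0) *
          ((x.choose d : ℝ) * p ^ d * (1 - p) ^ (x - d)) := by
      apply Finset.sum_congr rfl
      intro d _
      simp only [hind d]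
    rw [e0]
    apply Finset.sum_subset (Finset.range_subset_range.mpr (by omega))
    intro d _ hd
    have hxd : x < d := by simp only [Finset.mem_range] at hd; omega
    simp [Nat.choose_eq_zero_of_lt hxd]
  have rhs_eq : Fcdf p x j
      = ∑ d ∈ Finset.range (N + 1),
      (if d ≤ j then (1 : ℝ) else 0) *
        ((x.choose d : ℝ) * p ^ d * (1 - p) ^ (x - d)) := by
    have e1 : Fcdf p x j = ∑ d ∈ Finset.range (j + 1),
        (if d ≤ j then (1 : ℝ) else 0) *
          ((x.choose d : ℝ) * p ^ d * (1 - p) ^ (x - d)) := by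
      apply Finset.sum_congr rfl
      intro d hd
      have hdj : d ≤ j := by simp only [Finset.mem_range] at hd; omega
      rw [if_pos hdj, one_mul]
    rw [e1]
    apply Finset.sum_subset (Finset.range_subset_range.mpr (by omega))
    intro d _ hd
    have hdj : ¬ d ≤ j := by simp only [Finset.mem_range] at hd; omega
    rw [if_neg hdj, zero_mul]
  rw [lhs_eq, rhs_eq]

lemma Fcdf_chain (q : ℝ) (hq0 : 0 < q) (hq1 : q ≤ 1) (z : ℕ) (hz : 1 ≤ z) (j : ℕ) :
    ∀ k, Fcdf (q / z) z j ≤ Fcdf (q / (z + k : ℕ)) (z + k) (j + k) := by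
  intro k
  induction k with
  | zero => simp
  | succ k ih =>
    have hz1 : (1 : ℝ) ≤ ((z + k : ℕ) : ℝ) := by exact_mod_cast (show 1 ≤ z + k by omega)
    have hzk : (0 : ℝ) < ((z + k : ℕ) : ℝ) := by linarith
    have hple : q / ((z + k + 1 : ℕ) : ℝ) ≤ q / ((z + k : ℕ) : ℝ) := by
      apply div_le_div_of_nonneg_left hq0.le hzk
      push_cast; linarith
    have hp0 : 0 ≤ q / ((z + k + 1 : ℕ) : ℝ) := by positivity
    have hp1 : q / ((z + k : ℕ) : ℝ) ≤ 1 := by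
      rw [div_le_one hzk]; linarith
    have hp1' : q / ((z + k + 1 : ℕ) : ℝ) ≤ 1 := le_trans hple hp1
    calc Fcdf (q / z) z j ≤ Fcdf (q / (z + k : ℕ)) (z + k) (j + k) := ih
      _ ≤ Fcdf (q / (z + k + 1 : ℕ)) (z + k) (j + k) := Fcdf_anti hp0 hple hp1 _ _
      _ ≤ Fcdf (q / (z + k + 1 : ℕ)) (z + k + 1) (j + k + 1) := Fcdf_step hp0 hp1' _ _

open Finset in
/-- Stochastic dominance of the post-departure queue length in the queue length:
for `1 ≤ z ≤ y` and `q ∈ (0,1]`, for every integer `m`,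
`P(z - D_z ≥ m) ≤ P(y - D_y ≥ m)` where `D_x ~ Bin(x, q/x)`. -/
theorem post_departure_stochastic_dominance (q : ℝ) (hq0 : 0 < q) (hq1 : q ≤ 1)
    (z y : ℕ) (hz : 1 ≤ z) (hzy : z ≤ y) (m : ℤ) :
    ∑ d ∈ Finset.range (z + 1),
      (if m ≤ (z : ℤ) - d then (1 : ℝ) else 0) *
        ((z.choose d : ℝ) * (q / z) ^ d * (1 - q / z) ^ (z - d))
    ≤ ∑ d ∈ Finset.range (y + 1),
      (if m ≤ (y : ℤ) - d then (1 : ℝ) else 0) *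
        ((y.choose d : ℝ) * (q / y) ^ d * (1 - q / y) ^ (y - d)) := by
  have hy1 : (1 : ℝ) ≤ (y : ℝ) := by exact_mod_cast le_trans hz hzy
  have hy0 : (0 : ℝ) < (y : ℝ) := by linarith
  have hpy0 : 0 ≤ q / y := by positivity
  have hpy1 : q / y ≤ 1 := by rw [div_le_one hy0]; linarith
  by_cases hm : m ≤ (z : ℤ)
  · have hmy : m ≤ (y : ℤ) := by omega
    rw [sum_eq_Fcdf _ _ _ hm, sum_eq_Fcdf _ _ _ hmy]
    have hk : z + (y - z) = y := by omega
    have hjk : ((z : ℤ) - m).toNat + (y - z) = ((y : ℤ) - m).toNat := by omega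
    have h := Fcdf_chain q hq0 hq1 z hz (((z : ℤ) - m).toNat) (y - z)
    rwa [hk, hjk] at h
  · have lhs0 : ∑ d ∈ Finset.range (z + 1),
      (if m ≤ (z : ℤ) - d then (1 : ℝ) else 0) *
        ((z.choose d : ℝ) * (q / z) ^ d * (1 - q / z) ^ (z - d)) = 0 := by
      apply Finset.sum_eq_zero
      intro d _
      rw [if_neg (by omega), zero_mul]
    rw [lhs0]
    apply Finset.sum_nonneg
    intro d _
    have h1' : 0 ≤ 1 - q / y := by linarith
    split <;> positivity
end

section
/- Let q ∈ (0,1], p > 0, and let V : ℕ → ℝ have increasing differences, i.e., V(x+z) - V(x) ≥ V(y+z) - V(y) whenever x > y and z > 0 (equivalently, V(y+1) - V(y) is nondecreasing in y). For an integer x ≥ 1 define f(x) = ∑_{d=0}^{x} (x choose d)(q/x)^d (1 - q/x)^{x-d} · p·(V(x+1-d) - V(x-d)). Then f(x) ≤ ∑_{d=0}^{x} (x choose d)(q/(x+1))^d (1 - q/(x+1))^{x-d} · p·(V(x+1-d) - V(x-d)). -/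
open Finset

/-- Binomial expectation of `g` under `Bin(n, r)`. -/
noncomputable def binExp (n : ℕ) (r : ℝ) (g : ℕ → ℝ) : ℝ :=
  ∑ d ∈ Finset.range (n + 1), (n.choose d : ℝ) * r ^ d * (1 - r) ^ (n - d) * g d

lemma binExp_mono_fun (n : ℕ) (r : ℝ) (hr0 : 0 ≤ r) (hr1 : r ≤ 1) {g h : ℕ → ℝ}
    (hgh : ∀ d, g d ≤ h d) : binExp n r g ≤ binExp n r h := by
  unfold binExp
  refine Finset.sum_le_sum fun d hd => ?_
  have h1 : (0:ℝ) ≤ (n.choose d : ℝ) * r ^ d * (1 - r) ^ (n - d) :=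
    mul_nonneg (mul_nonneg (Nat.cast_nonneg _) (pow_nonneg hr0 _))
      (pow_nonneg (by linarith) _)
  exact mul_le_mul_of_nonneg_left (hgh d) h1

lemma binExp_rec (n : ℕ) (r : ℝ) (g : ℕ → ℝ) :
    binExp (n + 1) r g = r * binExp n r (fun d => g (d + 1)) + (1 - r) * binExp n r g := by
  unfold binExp
  set C : ℕ → ℝ := fun d => (n.choose d : ℝ) * r ^ d * (1 - r) ^ (n - d) * g d with hC
  set A : ℕ → ℝ := fun i => (n.choose i : ℝ) * r ^ i * (1 - r) ^ (n - i) * g (i + 1) with hA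
  have hCtop : C (n + 1) = 0 := by simp [hC]
  have step : ∀ i ∈ Finset.range (n + 1),
      ((n+1).choose (i+1) : ℝ) * r ^ (i+1) * (1 - r) ^ (n + 1 - (i+1)) * g (i+1)
        = r * A i + (1 - r) * C (i + 1) := by
    intro i hi
    simp only [Finset.mem_range] at hi
    rcases Nat.lt_or_ge i n with h | h
    · have e1 : n + 1 - (i + 1) = (n - (i + 1)) + 1 := by omega
      have e2 : n - i = (n - (i + 1)) + 1 := by omega
      rw [Nat.choose_succ_succ]
      simp only [hA, hC, e1, e2]
      push_cast
      ring
    · have hi1 : i = n := by omega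
      subst hi1
      simp only [hA, hC, Nat.choose_succ_succ, Nat.choose_succ_self, Nat.choose_self,
        Nat.sub_self, Nat.add_sub_cancel_left]
      push_cast
      ring
  rw [Finset.sum_range_succ'
    (fun d => ((n+1).choose d : ℝ) * r ^ d * (1 - r) ^ (n + 1 - d) * g d) (n + 1)]
  rw [Finset.sum_congr rfl step, Finset.sum_add_distrib, ← Finset.mul_sum, ← Finset.mul_sum]
  rw [Finset.sum_range_succ (fun i => C (i + 1)) n, hCtop,
    Finset.sum_range_succ' C n]
  have hf0 : ((n+1).choose 0 : ℝ) * r ^ 0 * (1 - r) ^ (n + 1 - 0) * g 0 = (1 - r) * C 0 := by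
    simp only [hC, Nat.choose_zero_right, pow_zero, Nat.sub_zero, Nat.cast_one]
    ring
  rw [hf0]
  ring

lemma binExp_antitone_prob :
    ∀ n : ℕ, ∀ g : ℕ → ℝ, (∀ d, g (d + 1) ≤ g d) →
    ∀ r s : ℝ, 0 ≤ r → r ≤ s → s ≤ 1 → binExp n s g ≤ binExp n r g := by
  intro n
  induction n with
  | zero =>
    intro g hg r s _ _ _
    simp [binExp]
  | succ n ih =>
    intro g hg r s hr0 hrs hs1
    rw [binExp_rec, binExp_rec]
    have hs0 : 0 ≤ s := le_trans hr0 hrs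
    have hr1 : r ≤ 1 := le_trans hrs hs1
    have h1 : binExp n s (fun d => g (d + 1)) ≤ binExp n r (fun d => g (d + 1)) :=
      ih _ (fun d => hg (d + 1)) r s hr0 hrs hs1
    have h2 : binExp n s g ≤ binExp n r g := ih g hg r s hr0 hrs hs1
    have h3 : binExp n r (fun d => g (d + 1)) ≤ binExp n r g :=
      binExp_mono_fun n r hr0 hr1 hg
    nlinarith [h1, h2, h3]

open Finset in
/-- If `V` has increasing differences, then the expected marginal value
`f(x) = E[p·(V(x+1-D) - V(x-D))]` (with `D ~ Bin(x, q/x)`) is bounded above by the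
corresponding expectation with the smaller per-job departure probability `q/(x+1)`. -/
theorem marginal_value_departure_bound (q p : ℝ) (hq0 : 0 < q) (hq1 : q ≤ 1) (hp : 0 < p)
    (V : ℕ → ℝ)
    (hV : ∀ x y z : ℕ, y < x → 0 < z → V (y + z) - V y ≤ V (x + z) - V x)
    (x : ℕ) (hx : 1 ≤ x) :
    ∑ d ∈ Finset.range (x + 1),
      (x.choose d : ℝ) * (q / x) ^ d * (1 - q / x) ^ (x - d) *
        (p * (V (x + 1 - d) - V (x - d)))
    ≤ ∑ d ∈ Finset.range (x + 1),
      (x.choose d : ℝ) * (q / (x + 1)) ^ d * (1 - q / (x + 1)) ^ (x - d) *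
        (p * (V (x + 1 - d) - V (x - d))) := by
  set g : ℕ → ℝ := fun d => p * (V (x + 1 - min d x) - V (x - min d x)) with hgdef
  have hxR : (1:ℝ) ≤ (x:ℝ) := by exact_mod_cast hx
  have hxpos : (0:ℝ) < (x:ℝ) := by linarith
  have hg : ∀ d, g (d + 1) ≤ g d := by
    intro d
    rcases Nat.lt_or_ge d x with h | h
    · have hmin1 : min (d + 1) x = d + 1 := by omega
      have hmin0 : min d x = d := by omega
      simp only [hgdef, hmin1, hmin0]
      have key : V (x - (d + 1) + 1) - V (x - (d + 1)) ≤ V (x - d + 1) - V (x - d) :=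
        hV (x - d) (x - (d + 1)) 1 (by omega) one_pos
      have e1 : x - (d + 1) + 1 = x - d := by omega
      have e2 : x - d + 1 = x + 1 - d := by omega
      have e3 : x + 1 - (d + 1) = x - d := by omega
      rw [e1, e2] at key
      rw [e3]
      exact mul_le_mul_of_nonneg_left key hp.le
    · have : min (d + 1) x = min d x := by omega
      simp [hgdef, this]
  have hsum : ∀ r : ℝ,
      ∑ d ∈ Finset.range (x + 1), (x.choose d : ℝ) * r ^ d * (1 - r) ^ (x - d) *
        (p * (V (x + 1 - d) - V (x - d))) = binExp x r g := by
    intro r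
    refine Finset.sum_congr rfl fun d hd => ?_
    simp only [Finset.mem_range] at hd
    have : min d x = d := by omega
    simp [hgdef, binExp, this]
  rw [hsum, hsum]
  refine binExp_antitone_prob x g hg (q / (x + 1)) (q / x) (by positivity) ?_ ?_
  · apply div_le_div_of_nonneg_left hq0.le hxpos
    linarith
  · rw [div_le_one hxpos]; linarith
end

section
/- For every natural number x ≥ 1, every real q, and every function B : ℕ → ℝ: (1-q)^{x+1} B(x+1) + ∑_{d=0}^{x} (x choose d) q^d (1-q)^{x-d} · ( (x+1)q/(d+1) - 1 ) · B(x-d) = (1-q) · ∑_{d=0}^{x} (x choose d) q^d (1-q)^{x-d} · ( B(x+1-d) - B(x-d) ). -/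
open Finset in
/-- Central summation identity of the appendix: the quantity appearing in the
threshold-policy proof telescopes into a weighted sum of first differences of `B`. -/
theorem threshold_telescoping_identity (x : ℕ) (hx : 1 ≤ x) (q : ℝ) (B : ℕ → ℝ) :
    (1 - q) ^ (x + 1) * B (x + 1) +
      ∑ d ∈ Finset.range (x + 1),
        (x.choose d : ℝ) * q ^ d * (1 - q) ^ (x - d) * ((x + 1) * q / (d + 1) - 1) * B (x - d)
    = (1 - q) *
      ∑ d ∈ Finset.range (x + 1),
        (x.choose d : ℝ) * q ^ d * (1 - q) ^ (x - d) * (B (x + 1 - d) - B (x - d)) := by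
  set f : ℕ → ℝ := fun j => (x.choose j : ℝ) * q ^ j * (1 - q) ^ (x + 1 - j) * B (x + 1 - j)
    with hf
  have key : ∀ d ∈ Finset.range (x + 1),
      (x.choose d : ℝ) * q ^ d * (1 - q) ^ (x - d) * ((x + 1) * q / (d + 1) - 1) * B (x - d)
      = f (d + 1) - (x.choose d : ℝ) * q ^ d * (1 - q) ^ (x + 1 - d) * B (x - d) := by
    intro d hd
    have hd' : d ≤ x := Nat.lt_succ_iff.mp (Finset.mem_range.mp hd)
    have hnat : x.choose d * (x + 1) = (x.choose d + x.choose (d + 1)) * (d + 1) := by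
      rw [add_mul, Nat.choose_succ_right_eq, ← Nat.mul_add]
      congr 1
      omega
    have hR : (x.choose d : ℝ) * ((x : ℝ) + 1) = ((x.choose d : ℝ) + x.choose (d + 1)) * ((d : ℝ) + 1) := by
      exact_mod_cast hnat
    have hq1 : ((d : ℝ) + 1) ≠ 0 := by positivity
    have h1 : x + 1 - (d + 1) = x - d := by omega
    have h2 : x + 1 - d = (x - d) + 1 := by omega
    simp only [hf, h1, h2, pow_succ]
    field_simp
    linear_combination q ^ d * (1 - q) ^ (x - d) * B (x - d) * q * hR
  rw [Finset.sum_congr rfl key, Finset.sum_sub_distrib]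
  have hshift : ∑ d ∈ Finset.range (x + 2), f d
      = ∑ d ∈ Finset.range (x + 1), f (d + 1) + f 0 := Finset.sum_range_succ' f (x + 1)
  have hshift2 : ∑ d ∈ Finset.range (x + 2), f d
      = ∑ d ∈ Finset.range (x + 1), f d + f (x + 1) := Finset.sum_range_succ f (x + 1)
  have hend : f (x + 1) = 0 := by
    simp [hf, Nat.choose_succ_self]
  have h0 : f 0 = (1 - q) ^ (x + 1) * B (x + 1) := by
    simp [hf]
  have hrhs : (1 - q) *
      ∑ d ∈ Finset.range (x + 1),
        (x.choose d : ℝ) * q ^ d * (1 - q) ^ (x - d) * (B (x + 1 - d) - B (x - d))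
      = ∑ d ∈ Finset.range (x + 1), f d
        - ∑ d ∈ Finset.range (x + 1),
            (x.choose d : ℝ) * q ^ d * (1 - q) ^ (x + 1 - d) * B (x - d) := by
    rw [Finset.mul_sum, ← Finset.sum_sub_distrib]
    refine Finset.sum_congr rfl fun d hd => ?_
    have hd' : d ≤ x := Nat.lt_succ_iff.mp (Finset.mem_range.mp hd)
    have h2 : x + 1 - d = (x - d) + 1 := by omega
    simp only [hf, h2, pow_succ]
    ring
  rw [hrhs]
  linarith [hshift, hshift2, hend, h0]
end

section
/- Let x ≥ 1 be a natural number, q ∈ [0,1], and let B : ℕ → ℝ be nondecreasing. Then (1-q)^{x+1} B(x+1) + ∑_{d=0}^{x} (x choose d) q^d (1-q)^{x-d} · ( (x+1)q/(d+1) - 1 ) · B(x-d) ≥ 0. -/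
open Finset in
/-- Nonnegativity conclusion of the appendix computation in the threshold-policy
proof, for a nondecreasing `B` and `q ∈ [0,1]`. -/
theorem threshold_sum_nonneg (x : ℕ) (hx : 1 ≤ x) (q : ℝ) (hq0 : 0 ≤ q) (hq1 : q ≤ 1)
    (B : ℕ → ℝ) (hB : Monotone B) :
    0 ≤ (1 - q) ^ (x + 1) * B (x + 1) +
      ∑ d ∈ Finset.range (x + 1),
        (x.choose d : ℝ) * q ^ d * (1 - q) ^ (x - d) * ((x + 1) * q / (d + 1) - 1) * B (x - d) := by
  have h1q : 0 ≤ 1 - q := by linarith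
  set f : ℕ → ℝ := fun e => (x.choose e : ℝ) * q ^ e * (1 - q) ^ (x + 1 - e) * B (x + 1 - e)
    with hf
  set g : ℕ → ℝ := fun d => (x.choose d : ℝ) * q ^ d * (1 - q) ^ (x - d) with hg
  have key : ∀ d ∈ Finset.range (x + 1),
      (x.choose d : ℝ) * q ^ d * (1 - q) ^ (x - d) * ((x + 1) * q / (d + 1) - 1) * B (x - d)
        = f (d + 1) - (1 - q) * (g d * B (x - d)) := by
    intro d hd
    have hdx : d ≤ x := Nat.lt_succ_iff.mp (Finset.mem_range.mp hd)
    have hsub : x + 1 - (d + 1) = x - d := by omega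
    have hmul : ((x : ℝ) + 1) * (x.choose d : ℝ)
        = ((x + 1).choose (d + 1) : ℝ) * ((d : ℝ) + 1) := by
      exact_mod_cast Nat.add_one_mul_choose_eq x d
    have hpas : (((x + 1).choose (d + 1)) : ℝ) = (x.choose (d + 1) : ℝ) + (x.choose d : ℝ) := by
      rw [Nat.choose_succ_succ]; push_cast; ring
    have hd1 : ((d : ℝ) + 1) ≠ 0 := by positivity
    simp only [hf, hg, hsub]
    field_simp
    linear_combination (q ^ (d + 1) * (1 - q) ^ (x - d) * B (x - d)) * hmul +
      (((d : ℝ) + 1) * q ^ (d + 1) * (1 - q) ^ (x - d) * B (x - d)) * hpas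
  have hexpr : (1 - q) ^ (x + 1) * B (x + 1) +
      ∑ d ∈ Finset.range (x + 1),
        (x.choose d : ℝ) * q ^ d * (1 - q) ^ (x - d) * ((x + 1) * q / (d + 1) - 1) * B (x - d)
      = (1 - q) * ∑ e ∈ Finset.range (x + 1), g e * (B (x - e + 1) - B (x - e)) := by
    rw [Finset.sum_congr rfl key]
    have hf0 : f 0 = (1 - q) ^ (x + 1) * B (x + 1) := by simp [hf]
    have hsplit : ∑ d ∈ Finset.range (x + 1), (f (d + 1) - (1 - q) * (g d * B (x - d)))
        = (∑ d ∈ Finset.range (x + 1), f (d + 1))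
          - (1 - q) * ∑ d ∈ Finset.range (x + 1), g d * B (x - d) := by
      rw [Finset.sum_sub_distrib, Finset.mul_sum]
    have h2 : ∑ e ∈ Finset.range (x + 2), f e
        = (∑ d ∈ Finset.range (x + 1), f (d + 1)) + f 0 := Finset.sum_range_succ' f (x + 1)
    have hftop : f (x + 1) = 0 := by simp [hf]
    have h3 : ∑ e ∈ Finset.range (x + 2), f e = ∑ e ∈ Finset.range (x + 1), f e := by
      rw [Finset.sum_range_succ, hftop, add_zero]
    have h4 : ∑ e ∈ Finset.range (x + 1), f e
        = (1 - q) * ∑ e ∈ Finset.range (x + 1), g e * B (x - e + 1) := by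
      rw [Finset.mul_sum]
      refine Finset.sum_congr rfl fun e he => ?_
      have hex : e ≤ x := Nat.lt_succ_iff.mp (Finset.mem_range.mp he)
      have hsub2 : x + 1 - e = x - e + 1 := by omega
      simp only [hf, hg, hsub2, pow_succ]
      ring
    have h5 : (∑ d ∈ Finset.range (x + 1), f (d + 1))
        = ∑ e ∈ Finset.range (x + 1), f e - f 0 := by
      rw [← h3, h2]; ring
    have h6 : ∑ e ∈ Finset.range (x + 1), g e * (B (x - e + 1) - B (x - e))
        = (∑ e ∈ Finset.range (x + 1), g e * B (x - e + 1))
          - ∑ e ∈ Finset.range (x + 1), g e * B (x - e) := by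
      rw [← Finset.sum_sub_distrib]
      exact Finset.sum_congr rfl fun e _ => by ring
    rw [hsplit, h5, h4, hf0, h6]
    ring
  rw [hexpr]
  refine mul_nonneg h1q (Finset.sum_nonneg fun e he => mul_nonneg ?_ ?_)
  · simp only [hg]
    positivity
  · exact sub_nonneg.mpr (hB (Nat.le_succ (x - e)))
end

section
/- Let p ∈ (0,1], q ∈ (0,1], and let V : ℕ → ℝ be nondecreasing with increasing differences (V(y+1) - V(y) nondecreasing in y). For an integer x ≥ 1 define f(x) = ∑_{d=0}^{x} (x choose d)(q/x)^d (1 - q/x)^{x-d} · p·(V(x+1-d) - V(x-d)). Then f(x+1) ≥ f(x) for every x ≥ 1; that is, the expected marginal value of admitting an arrival is nondecreasing in the queue length, so the optimal admission policy is a threshold policy. -/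
open Finset

/-- binomial weight -/
def Bw (n k : ℕ) (r : ℝ) : ℝ := (n.choose k : ℝ) * r ^ k * (1 - r) ^ (n - k)

/-- expectation of g under Bin(n, r) -/
def Ew (n : ℕ) (r : ℝ) (g : ℕ → ℝ) : ℝ := ∑ k ∈ range (n + 1), Bw n k r * g k

lemma Bw_nonneg {n k : ℕ} {r : ℝ} (h0 : 0 ≤ r) (h1 : r ≤ 1) : 0 ≤ Bw n k r := by
  have h2 : (0:ℝ) ≤ 1 - r := by linarith
  unfold Bw; positivity

lemma Ew_rec (n : ℕ) (r : ℝ) (g : ℕ → ℝ) :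
    Ew (n+1) r g = (1 - r) * Ew n r g + r * Ew n r (fun k => g (k+1)) := by
  unfold Ew Bw
  rw [Finset.sum_range_succ' (fun k => ((n+1).choose k : ℝ) * r ^ k * (1-r)^(n+1-k) * g k) (n+1)]
  have hsplit : ∀ i ∈ range (n+1),
      ((n+1).choose (i+1) : ℝ) * r ^ (i+1) * (1-r)^(n+1-(i+1)) * g (i+1)
        = r * ((n.choose i : ℝ) * r ^ i * (1-r)^(n-i) * g (i+1))
          + (n.choose (i+1) : ℝ) * r ^ (i+1) * (1-r)^(n-i) * g (i+1) := by
    intro i hi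
    have : n + 1 - (i+1) = n - i := by omega
    rw [this, Nat.choose_succ_succ]
    push_cast
    ring
  rw [Finset.sum_congr rfl hsplit, Finset.sum_add_distrib, ← Finset.mul_sum]
  have hR : (1 - r) * ∑ k ∈ range (n+1), (n.choose k : ℝ) * r ^ k * (1-r)^(n-k) * g k
      = (∑ i ∈ range (n+1), (n.choose (i+1) : ℝ) * r ^ (i+1) * (1-r)^(n-i) * g (i+1))
        + ((n+1).choose 0 : ℝ) * r ^ 0 * (1-r)^(n+1-0) * g 0 := by
    rw [Finset.sum_range_succ' (fun k => (n.choose k : ℝ) * r ^ k * (1-r)^(n-k) * g k) n]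
    rw [Finset.sum_range_succ (fun i => (n.choose (i+1) : ℝ) * r ^ (i+1) * (1-r)^(n-i) * g (i+1)) n]
    rw [Nat.choose_succ_self]
    have hterm : ∀ i ∈ range n,
        (1-r) * ((n.choose (i+1) : ℝ) * r ^ (i+1) * (1-r)^(n-(i+1)) * g (i+1))
          = (n.choose (i+1) : ℝ) * r ^ (i+1) * (1-r)^(n-i) * g (i+1) := by
      intro i hi
      have hi' : i < n := Finset.mem_range.mp hi
      have : n - i = (n - (i+1)) + 1 := by omega
      rw [this, pow_succ]
      ring
    rw [mul_add, Finset.mul_sum, Finset.sum_congr rfl hterm]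
    simp [pow_succ]
    ring
  beta_reduce
  linear_combination -hR

lemma Ew_le_of_le {n : ℕ} {r : ℝ} (h0 : 0 ≤ r) (h1 : r ≤ 1) {g h : ℕ → ℝ}
    (hgh : ∀ k, g k ≤ h k) : Ew n r g ≤ Ew n r h := by
  unfold Ew
  apply Finset.sum_le_sum
  intro k _
  exact mul_le_mul_of_nonneg_left (hgh k) (Bw_nonneg h0 h1)

lemma Ew_mono_n {n : ℕ} {r : ℝ} (h0 : 0 ≤ r) (h1 : r ≤ 1) {g : ℕ → ℝ}
    (hg : Monotone g) : Ew n r g ≤ Ew (n+1) r g := by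
  rw [Ew_rec]
  have h2 : Ew n r g ≤ Ew n r (fun k => g (k+1)) :=
    Ew_le_of_le h0 h1 (fun k => hg (Nat.le_succ k))
  nlinarith

lemma Ew_mono_r (n : ℕ) {r r' : ℝ} (h0 : 0 ≤ r) (hrr : r ≤ r') (h1 : r' ≤ 1)
    {g : ℕ → ℝ} (hg : Monotone g) : Ew n r g ≤ Ew n r' g := by
  induction n generalizing g with
  | zero => simp [Ew, Bw]
  | succ n ih =>
    rw [Ew_rec, Ew_rec]
    have hg' : Monotone (fun k => g (k+1)) := fun a b hab => hg (by omega)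
    have h1' : Ew n r g ≤ Ew n r' g := ih hg
    have h2' : Ew n r (fun k => g (k+1)) ≤ Ew n r' (fun k => g (k+1)) := ih hg'
    have h3' : Ew n r' g ≤ Ew n r' (fun k => g (k+1)) :=
      Ew_le_of_le (le_trans h0 hrr) h1 (fun k => hg (Nat.le_succ k))
    nlinarith

open Finset in
/-- Threshold-policy lemma (Lemma 4.3): if `V : ℕ → ℝ` is nondecreasing with increasing
differences, then the expected marginal value of admitting an arrival,
`f(x) = ∑_{d=0}^{x} (x choose d)(q/x)^d (1-q/x)^{x-d} · p·(V(x+1-d) - V(x-d))`,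
is nondecreasing in the queue length `x ≥ 1`. -/
theorem marginal_value_monotone (p q : ℝ) (hp0 : 0 < p) (hp1 : p ≤ 1) (hq0 : 0 < q)
    (hq1 : q ≤ 1) (V : ℕ → ℝ) (hVmono : Monotone V)
    (hVdiff : ∀ y : ℕ, V (y + 1) - V y ≤ V (y + 2) - V (y + 1))
    (f : ℕ → ℝ)
    (hf : ∀ x : ℕ, 1 ≤ x →
      f x = ∑ d ∈ Finset.range (x + 1),
        (x.choose d : ℝ) * (q / x) ^ d * (1 - q / x) ^ (x - d) *
          (p * (V (x + 1 - d) - V (x - d)))) :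
    ∀ x : ℕ, 1 ≤ x → f x ≤ f (x + 1) := by
  set g : ℕ → ℝ := fun k => V (k+1) - V k with hgdef
  have hg : Monotone g := by
    apply monotone_nat_of_le_succ
    intro k
    have := hVdiff k
    simp only [hgdef]
    have h2 : k + 1 + 1 = k + 2 := rfl
    linarith [hVdiff k]
  -- rewrite f x as p * Ew x (1 - q/x) g
  have key : ∀ x : ℕ, 1 ≤ x → f x = p * Ew x (1 - q / x) g := by
    intro x hx
    rw [hf x hx]
    have hrefl := Finset.sum_range_reflect
      (fun d => (x.choose d : ℝ) * (q / x) ^ d * (1 - q / x) ^ (x - d) *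
          (p * (V (x + 1 - d) - V (x - d)))) (x+1)
    rw [← hrefl]
    unfold Ew Bw
    rw [Finset.mul_sum]
    apply Finset.sum_congr rfl
    intro k hk
    have hk' : k ≤ x := Nat.lt_succ_iff.mp (Finset.mem_range.mp hk)
    have e1 : x + 1 - 1 - k = x - k := by omega
    have e2 : x - (x - k) = k := by omega
    have e3 : x + 1 - (x - k) = k + 1 := by omega
    have e4 : x.choose (x - k) = x.choose k := Nat.choose_symm hk'
    rw [e1, e2, e3, e4]
    have e5 : (1 : ℝ) - (1 - q / x) = q / x := by ring
    rw [show ((1 : ℝ) - (1 - q / ↑x)) = q / ↑x from e5]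
    ring
  intro x hx
  have hx1 : (1:ℝ) ≤ (x:ℝ) := by exact_mod_cast hx
  have hxpos : (0:ℝ) < x := by linarith
  have hx1pos : (0:ℝ) < (x:ℝ) + 1 := by linarith
  set r : ℝ := 1 - q / x with hr
  set r' : ℝ := 1 - q / (x+1) with hr'
  have hr0 : 0 ≤ r := by
    have : q / x ≤ 1 := by
      rw [div_le_one hxpos]; linarith
    simp [hr]; linarith
  have hrr' : r ≤ r' := by
    have : q / (x+1) ≤ q / x := by
      apply div_le_div_of_nonneg_left (le_of_lt hq0) hxpos
      linarith
    simp [hr, hr']; linarith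
  have hr'1 : r' ≤ 1 := by
    have : 0 ≤ q / ((x:ℝ)+1) := by positivity
    simp [hr']; linarith
  rw [key x hx, key (x+1) (by omega)]
  have cast1 : ((x+1 : ℕ) : ℝ) = (x:ℝ) + 1 := by push_cast; ring
  rw [cast1]
  have step1 : Ew x r g ≤ Ew x r' g := Ew_mono_r x hr0 hrr' hr'1 hg
  have step2 : Ew x r' g ≤ Ew (x+1) r' g := Ew_mono_n (le_trans hr0 hrr') hr'1 hg
  have : Ew x r g ≤ Ew (x+1) r' g := le_trans step1 step2
  exact mul_le_mul_of_nonneg_left this (le_of_lt hp0)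
end

section
/- Let C > 0, λ ∈ ℝ, α ∈ (0,1), p ∈ (0,1), q ∈ (0,1]. Define the finite-horizon discounted value functions V_t : ℕ → ℝ by V_0(x) = C·x and V_{t+1}(x) = C·x + min( α·∑_{d=0}^{x} π_x(d)·( p·V_t(x+1-d) + (1-p)·V_t(x-d) ), λ + α·∑_{d=0}^{x} π_x(d)·V_t(x-d) ), where π_x(d) = (x choose d)(q/x)^d(1-q/x)^{x-d} for x ≥ 1 and π_0(0) = 1. Then for every t, V_t is nondecreasing on ℕ. -/
/-!
Write `E_n^r f` for the mean of `f` over the jobs left when each of `n` jobs departs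
independently with probability `r`. Conditioning on the last job gives
`E_{n+1}^r f = (1 - r) E_n^r (f ∘ succ) + r E_n^r f`, from which, for monotone `f`, one reads
off by induction on `n` that `E_n^r f` is nondecreasing in `n` and nonincreasing in `r`.
Hence `E_x^{q/x} f ≤ E_{x+1}^{q/x} f ≤ E_{x+1}^{q/(x+1)} f`: one more job in the queue never
lowers the expected cost-to-go. Monotonicity of `V t` then propagates through the Bellman
recursion by induction on `t`, since `C x`, `min` and nonnegative combinations preserve it.
-/

open Finset

/-- The expectation of `f (n - D)` for `D ~ Bin(n, r)`. -/
noncomputable def survivorMean (f : ℕ → ℝ) (n : ℕ) (r : ℝ) : ℝ :=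
  ∑ d ∈ range (n + 1), (n.choose d : ℝ) * r ^ d * (1 - r) ^ (n - d) * f (n - d)

theorem survivorMean_succ (f : ℕ → ℝ) (n : ℕ) (r : ℝ) :
    survivorMean f (n + 1) r =
      (1 - r) * survivorMean (fun k => f (k + 1)) n r + r * survivorMean f n r := by
  have hstay : ∑ d ∈ range (n + 1), (n.choose (d + 1) : ℝ) * r ^ (d + 1) * (1 - r) ^ (n - d) *
      f (n - d) + (1 - r) ^ (n + 1) * f (n + 1) =
        (1 - r) * survivorMean (fun k => f (k + 1)) n r := by
    rw [sum_range_succ, survivorMean, sum_range_succ', Nat.choose_succ_self, mul_add, mul_sum]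
    simp only [Nat.cast_zero, zero_mul, add_zero, Nat.choose_zero_right, Nat.cast_one, pow_zero,
      Nat.sub_zero, one_mul, pow_succ]
    congr 1
    · refine sum_congr rfl fun d hd => ?_
      obtain ⟨m, rfl⟩ := Nat.exists_eq_add_of_lt (mem_range.mp hd)
      rw [show d + m + 1 - d = m + 1 by omega, show d + m + 1 - (d + 1) = m by omega]
      ring
    · ring
  have hleave : ∑ d ∈ range (n + 1),
      (n.choose d : ℝ) * r ^ (d + 1) * (1 - r) ^ (n - d) * f (n - d) =
        r * survivorMean f n r := by
    rw [survivorMean, mul_sum]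
    exact sum_congr rfl fun d _ => by ring
  rw [survivorMean, sum_range_succ', ← hstay, ← hleave]
  simp only [Nat.add_sub_add_right, Nat.choose_succ_succ, Nat.cast_add, add_mul, sum_add_distrib,
    Nat.choose_zero_right, Nat.cast_one, pow_zero, Nat.sub_zero, one_mul]
  ring

@[simp]
theorem survivorMean_zero (f : ℕ → ℝ) (r : ℝ) : survivorMean f 0 r = f 0 := by
  simp [survivorMean]

section Monotone

variable {f g : ℕ → ℝ} {r : ℝ}

theorem survivorMean_mono (hfg : f ≤ g) (hr0 : 0 ≤ r) (hr1 : r ≤ 1) (n : ℕ) :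
    survivorMean f n r ≤ survivorMean g n r := by
  unfold survivorMean
  gcongr
  exact hfg _

theorem survivorMean_le_succ (hf : Monotone f) (hr0 : 0 ≤ r) (hr1 : r ≤ 1) (n : ℕ) :
    survivorMean f n r ≤ survivorMean f (n + 1) r := by
  have hshift : survivorMean f n r ≤ survivorMean (fun k => f (k + 1)) n r :=
    survivorMean_mono (fun k => hf k.le_succ) hr0 hr1 n
  rw [survivorMean_succ]
  nlinarith

theorem survivorMean_antitone_rate (hf : Monotone f) {r' : ℝ} (hr0 : 0 ≤ r) (hrr' : r ≤ r')
    (hr'1 : r' ≤ 1) (n : ℕ) : survivorMean f n r' ≤ survivorMean f n r := by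
  induction n generalizing f with
  | zero => simp
  | succ n ih =>
    have hf' : Monotone fun k => f (k + 1) := fun a b hab => hf (Nat.succ_le_succ hab)
    have hshift := ih hf'
    have hstay := ih hf
    have hgap : survivorMean f n r' ≤ survivorMean (fun k => f (k + 1)) n r' :=
      survivorMean_mono (fun k => hf k.le_succ) (hr0.trans hrr') hr'1 n
    rw [survivorMean_succ, survivorMean_succ]
    nlinarith [mul_le_mul_of_nonneg_left hshift (by linarith : (0 : ℝ) ≤ 1 - r),
      mul_le_mul_of_nonneg_left hstay hr0,
      mul_le_mul_of_nonneg_left hgap (by linarith : (0 : ℝ) ≤ r' - r)]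

theorem survivorMean_div_le_succ (hf : Monotone f) {q : ℝ} (hq0 : 0 ≤ q) (hq1 : q ≤ 1)
    (n : ℕ) :
    survivorMean f n (q / n) ≤ survivorMean f (n + 1) (q / (n + 1 : ℕ)) := by
  rcases n.eq_zero_or_pos with rfl | hn
  · simpa using survivorMean_le_succ hf hq0 hq1 0
  · have hn1 : (1 : ℝ) ≤ n := by exact_mod_cast hn
    have hrate : q / (n + 1 : ℕ) ≤ q / n := by
      gcongr
      simp
    have hr1 : q / n ≤ 1 := (div_le_one (by positivity)).mpr (hq1.trans hn1)
    calc survivorMean f n (q / n) ≤ survivorMean f (n + 1) (q / n) :=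
          survivorMean_le_succ hf (by positivity) hr1 n
      _ ≤ survivorMean f (n + 1) (q / (n + 1 : ℕ)) :=
          survivorMean_antitone_rate hf (by positivity) hrate hr1 _

end Monotone

open Finset in
theorem finite_horizon_value_monotone_general (C lam α p q : ℝ) (hC : 0 < C) (hα0 : 0 < α)
    (hp0 : 0 < p) (hp1 : p < 1) (hq0 : 0 < q) (hq1 : q ≤ 1)
    (V : ℕ → ℕ → ℝ) (hV0 : ∀ x : ℕ, V 0 x = C * x)
    (hVrec : ∀ t x : ℕ, V (t + 1) x = C * x +
      min
        (α * ∑ d ∈ Finset.range (x + 1),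
          (x.choose d : ℝ) * (q / x) ^ d * (1 - q / x) ^ (x - d) *
            (p * V t (x + 1 - d) + (1 - p) * V t (x - d)))
        (lam + α * ∑ d ∈ Finset.range (x + 1),
          (x.choose d : ℝ) * (q / x) ^ d * (1 - q / x) ^ (x - d) * V t (x - d))) :
    ∀ t : ℕ, Monotone (V t) := by
  intro t
  induction t with
  | zero =>
    intro a b hab
    simp only [hV0]
    gcongr
  | succ t ih =>
    set W : ℕ → ℝ := fun k => p * V t (k + 1) + (1 - p) * V t k
    have hW : Monotone W := fun a b hab => by
      have h1p : 0 ≤ 1 - p := by linarith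
      simp only [W]
      gcongr
      exacts [ih (Nat.succ_le_succ hab), ih hab]
    have hadmit (x : ℕ) : ∑ d ∈ range (x + 1), (x.choose d : ℝ) * (q / x) ^ d *
        (1 - q / x) ^ (x - d) * (p * V t (x + 1 - d) + (1 - p) * V t (x - d)) =
        survivorMean W x (q / x) :=
      sum_congr rfl fun d hd => by rw [Nat.sub_add_comm (Nat.lt_succ_iff.mp (mem_range.mp hd))]
    have hpassive (x : ℕ) : ∑ d ∈ range (x + 1), (x.choose d : ℝ) * (q / x) ^ d *
        (1 - q / x) ^ (x - d) * V t (x - d) = survivorMean (V t) x (q / x) := rfl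
    refine monotone_nat_of_le_succ fun x => ?_
    rw [hVrec, hVrec, hadmit, hadmit, hpassive, hpassive]
    gcongr C * ?_ + min (α * ?_) (lam + α * ?_)
    · exact_mod_cast x.le_succ
    · exact survivorMean_div_le_succ hW hq0.le hq1 x
    · exact survivorMean_div_le_succ ih hq0.le hq1 x

open Finset in
/-- Finite-horizon monotonicity of the discounted value function (Lemma 4.1):
the value functions `V t` of the controlled processor-sharing queue, defined by the
finite-horizon dynamic programming recursion, are nondecreasing on `ℕ` for every
horizon `t`. Here `π_x(d) = (x choose d)(q/x)^d(1-q/x)^{x-d}` (with `π_0(0) = 1`, which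
the formula yields by the conventions `q/0 = 0` and `0^0 = 1`). -/
theorem finite_horizon_value_monotone (C lam α p q : ℝ) (hC : 0 < C) (hα0 : 0 < α)
    (hα1 : α < 1) (hp0 : 0 < p) (hp1 : p < 1) (hq0 : 0 < q) (hq1 : q ≤ 1)
    (V : ℕ → ℕ → ℝ) (hV0 : ∀ x : ℕ, V 0 x = C * x)
    (hVrec : ∀ t x : ℕ, V (t + 1) x = C * x +
      min
        (α * ∑ d ∈ Finset.range (x + 1),
          (x.choose d : ℝ) * (q / x) ^ d * (1 - q / x) ^ (x - d) *
            (p * V t (x + 1 - d) + (1 - p) * V t (x - d)))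
        (lam + α * ∑ d ∈ Finset.range (x + 1),
          (x.choose d : ℝ) * (q / x) ^ d * (1 - q / x) ^ (x - d) * V t (x - d))) :
    ∀ t : ℕ, Monotone (V t) :=
  finite_horizon_value_monotone_general C lam α p q hC hα0 hp0 hp1 hq0 hq1 V hV0 hVrec
end

section
/- Let p, q ∈ (0,1) and k ∈ ℕ. For a threshold m ∈ ℕ, define the Markov transition kernel P_m on the state space {0,1,...,m+1} of the processor-sharing queue under the threshold-m admission policy: from state y ≥ 1 the departure count D has the Bin(y, q/y) distribution (P(D = d) = (y choose d)(q/y)^d(1-q/y)^{y-d}), from state 0 there are no departures; if y ≤ m (active state) an independent Bernoulli(p) arrival ξ is admitted and the next state is y - D + ξ, while if y = m+1 (passive state) the next state is y - D. Let π^k and π^{k+1} be stationary distributions of P_k on {0,...,k+1} and of P_{k+1} on {0,...,k+2} respectively (nonnegative vectors summing to 1 with π P = π). Then π^{k+1}(k+2) ≤ π^k(k+1), and consequently ∑_{j=0}^{k} π^k(j) ≤ ∑_{j=0}^{k+1} π^{k+1}(j); that is, the stationary probability of the set of active states is nondecreasing in the threshold. -/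
open Finset

/-- Departure distribution of the egalitarian processor-sharing queue with `y` jobs:
`P(D = d) = (y choose d)(q/y)^d (1-q/y)^{y-d}`. (For `y = 0` the conventions
`q/0 = 0`, `0^0 = 1` give `P(D = 0) = 1`: no departures from the empty queue.) -/
noncomputable def depWeight (q : ℝ) (y d : ℕ) : ℝ :=
  (y.choose d : ℝ) * (q / y) ^ d * (1 - q / y) ^ (y - d)

/-- Transition kernel of the processor-sharing queue under the threshold-`m` admission
policy: from an active state `y ≤ m` the next state is `y - D + ξ` with
`ξ ~ Bernoulli(p)` admitted, from a passive state `y > m` it is `y - D`. -/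
noncomputable def thresholdKernel (p q : ℝ) (m : ℕ) (y j : ℕ) : ℝ :=
  ∑ d ∈ Finset.range (y + 1), depWeight q y d *
    (if y ≤ m then
      p * (if y - d + 1 = j then (1 : ℝ) else 0) + (1 - p) * (if y - d = j then (1 : ℝ) else 0)
     else (if y - d = j then (1 : ℝ) else 0))

/-!
The stationary mass of the passive state `m + 1` is the reciprocal of its mean return time
(Kac's formula, obtained by testing stationarity against the hitting time of `m + 1`).
Returning to `m + 1` means dropping to `m + 1 - D` and climbing back level by level, so the mean
return time is `1 + ∑_{i ≤ m} P(D ≥ m + 1 - i) W(i)`, where `W(i)` is the mean passage time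
from `i` to `i + 1` when arrivals are always admitted. Both `W` and the mean return time are
nondecreasing: from a higher level the chain is stochastically less likely to fall to or below a
fixed level, while the mean number of departures `E D = q` does not depend on the level.
-/

noncomputable def binomWeight (s : ℝ) (n d : ℕ) : ℝ :=
  (n.choose d : ℝ) * s ^ d * (1 - s) ^ (n - d)

noncomputable def binomTail (s : ℝ) (n t : ℕ) : ℝ :=
  ∑ d ∈ range (n + 1), if t ≤ d then binomWeight s n d else 0

section BinomialTail

variable {s : ℝ}

theorem binomWeight_nonneg (hs0 : 0 ≤ s) (hs1 : s ≤ 1) (n d : ℕ) : 0 ≤ binomWeight s n d := by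
  have : 0 ≤ 1 - s := sub_nonneg.2 hs1
  unfold binomWeight; positivity

theorem binomWeight_succ_succ (s : ℝ) (n d : ℕ) :
    binomWeight s (n + 1) (d + 1) = s * binomWeight s n d + (1 - s) * binomWeight s n (d + 1) := by
  unfold binomWeight
  rw [Nat.choose_succ_succ', Nat.cast_add, Nat.add_sub_add_right]
  rcases lt_or_ge d n with h | h
  · rw [show n - d = n - (d + 1) + 1 by omega]; ring
  · rw [Nat.choose_eq_zero_of_lt (by omega : n < d + 1), Nat.sub_eq_zero_of_le h,
      Nat.cast_zero]
    ring

theorem binomTail_zero_right (s : ℝ) (n : ℕ) : binomTail s n 0 = 1 := by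
  have h := (add_pow s (1 - s) n).symm
  rw [add_sub_cancel, one_pow] at h
  simp only [binomTail, zero_le, if_true, binomWeight]
  exact (sum_congr rfl fun d _ => by ring).trans h

theorem binomTail_of_lt {n t : ℕ} (h : n < t) : binomTail s n t = 0 :=
  sum_eq_zero fun d hd => if_neg (by rw [mem_range] at hd; omega)

theorem binomTail_one (s : ℝ) (n : ℕ) : binomTail s n 1 = 1 - (1 - s) ^ n := by
  have h := binomTail_zero_right s n
  rw [binomTail, sum_range_succ', if_pos le_rfl] at h
  rw [binomTail, sum_range_succ', if_neg (by omega), add_zero]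
  simp only [Nat.le_add_left, zero_le, if_true] at h ⊢
  have h0 : binomWeight s n 0 = (1 - s) ^ n := by simp [binomWeight]
  linarith

theorem binomTail_succ_succ (s : ℝ) (n t : ℕ) :
    binomTail s (n + 1) (t + 1) = s * binomTail s n t + (1 - s) * binomTail s n (t + 1) := by
  have hshift : binomTail s n (t + 1) =
      ∑ d ∈ range (n + 1), if t ≤ d then binomWeight s n (d + 1) else 0 := by
    rw [binomTail, sum_range_succ' _ n, sum_range_succ]
    simp [binomWeight, Nat.choose_succ_self]
  rw [hshift, binomTail, binomTail, sum_range_succ', mul_sum, mul_sum, ← sum_add_distrib]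
  rw [if_neg (by omega), add_zero]
  refine sum_congr rfl fun d _ => ?_
  simp only [Nat.add_le_add_iff_right]
  split_ifs <;> simp [binomWeight_succ_succ]

theorem binomTail_nonneg (hs0 : 0 ≤ s) (hs1 : s ≤ 1) (n t : ℕ) : 0 ≤ binomTail s n t :=
  sum_nonneg fun d _ => by split_ifs <;> simp [binomWeight_nonneg hs0 hs1]

theorem binomTail_succ_le (hs0 : 0 ≤ s) (hs1 : s ≤ 1) (n t : ℕ) :
    binomTail s n (t + 1) ≤ binomTail s n t :=
  sum_le_sum fun d _ => by
    split_ifs <;> first | omega | exact le_rfl | exact binomWeight_nonneg hs0 hs1 n d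

theorem binomTail_succ_succ_le (hs0 : 0 ≤ s) (hs1 : s ≤ 1) (n t : ℕ) :
    binomTail s (n + 1) (t + 1) ≤ binomTail s n t := by
  rw [binomTail_succ_succ]
  nlinarith [binomTail_succ_le hs0 hs1 n t]

theorem binomTail_mono_left {s' : ℝ} (hs0 : 0 ≤ s) (hss' : s ≤ s') (hs'1 : s' ≤ 1) (n t : ℕ) :
    binomTail s n t ≤ binomTail s' n t := by
  induction n generalizing t with
  | zero => simp [binomTail, binomWeight]
  | succ n ih =>
    cases t with
    | zero => simp [binomTail_zero_right]
    | succ t =>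
      rw [binomTail_succ_succ, binomTail_succ_succ]
      nlinarith [ih t, ih (t + 1), binomTail_succ_le (hs0.trans hss') hs'1 n t]

theorem sum_range_binomTail_succ (s : ℝ) (n : ℕ) :
    ∑ t ∈ range n, binomTail s n (t + 1) = n * s := by
  induction n with
  | zero => simp
  | succ n ih =>
    simp only [binomTail_succ_succ, sum_add_distrib, ← mul_sum]
    rw [sum_range_succ' (binomTail s n), sum_range_succ, ih, binomTail_zero_right,
      binomTail_of_lt (by omega : n < n + 1)]
    push_cast; ring

end BinomialTail

theorem div_natCast_le_self {q : ℝ} (hq : 0 ≤ q) (y : ℕ) : q / y ≤ q := by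
  rcases Nat.eq_zero_or_pos y with rfl | hy
  · simpa using hq
  · exact div_le_self hq (by exact_mod_cast hy)

theorem natCast_mul_div_le_self {q : ℝ} (hq : 0 ≤ q) (y : ℕ) : y * (q / y) ≤ q := by
  rcases Nat.eq_zero_or_pos y with rfl | hy
  · simpa using hq
  · rw [mul_div_cancel₀ q (by positivity)]

noncomputable def depTail (q : ℝ) (y t : ℕ) : ℝ := binomTail (q / y) y t

section DepartureTail

variable {q : ℝ}

theorem depTail_zero_right (q : ℝ) (y : ℕ) : depTail q y 0 = 1 := binomTail_zero_right _ y

theorem depTail_nonneg (hq0 : 0 ≤ q) (hq1 : q ≤ 1) (y t : ℕ) : 0 ≤ depTail q y t :=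
  binomTail_nonneg (by positivity) ((div_natCast_le_self hq0 y).trans hq1) y t

theorem depTail_succ_succ_le (hq0 : 0 ≤ q) (hq1 : q ≤ 1) (y t : ℕ) :
    depTail q (y + 1) (t + 1) ≤ depTail q y t := by
  have hs : q / (y + 1 : ℕ) ≤ 1 := (div_natCast_le_self hq0 _).trans hq1
  refine (binomTail_succ_succ_le (by positivity) hs y t).trans ?_
  -- `q / 0 = 0`, but `Bin(0, s)` does not depend on `s`
  rcases Nat.eq_zero_or_pos y with rfl | hy
  · simp [depTail, binomTail, binomWeight]
  · refine binomTail_mono_left (by positivity) ?_ ((div_natCast_le_self hq0 y).trans hq1) y t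
    exact div_le_div_of_nonneg_left hq0 (by exact_mod_cast hy) (by simp)

theorem sum_range_depTail_sub (q : ℝ) (y : ℕ) :
    ∑ i ∈ range y, depTail q y (y - i) = y * (q / y) := by
  rw [← sum_range_binomTail_succ, ← sum_range_reflect]
  exact sum_congr rfl fun i hi => by rw [mem_range] at hi; rw [depTail]; congr 1; omega

theorem sum_depWeight_mul_indicator (q : ℝ) (y r i : ℕ) :
    ∑ d ∈ range (y + 1), depWeight q y d * (if y - d + r ≤ i then 1 else 0) =
      depTail q y (y + r - i) := by
  refine sum_congr rfl fun d hd => ?_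
  rw [mem_range] at hd
  by_cases h : y - d + r ≤ i
  · rw [if_pos h, if_pos (by omega), mul_one]; rfl
  · rw [if_neg h, if_neg (by omega), mul_zero]

end DepartureTail

/-- `P(y - D + ξ ≤ i)` for the next state from an active state `y`. -/
noncomputable def activeCdf (p q : ℝ) (y i : ℕ) : ℝ :=
  p * depTail q y (y + 1 - i) + (1 - p) * depTail q y (y - i)

section ActiveCdf

variable {p q : ℝ}

theorem activeCdf_nonneg (hp0 : 0 ≤ p) (hp1 : p ≤ 1) (hq0 : 0 ≤ q) (hq1 : q ≤ 1) (y i : ℕ) :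
    0 ≤ activeCdf p q y i :=
  add_nonneg (mul_nonneg hp0 (depTail_nonneg hq0 hq1 _ _))
    (mul_nonneg (sub_nonneg.2 hp1) (depTail_nonneg hq0 hq1 _ _))

theorem activeCdf_self_lt_one (hp0 : 0 < p) (hq0 : 0 ≤ q) (hq1 : q < 1) (y : ℕ) :
    activeCdf p q y y < 1 := by
  have hs : 0 < 1 - q / y := sub_pos.2 ((div_natCast_le_self hq0 y).trans_lt hq1)
  have : 0 < p * (1 - q / y) ^ y := by positivity
  rw [activeCdf, Nat.add_sub_cancel_left, Nat.sub_self, depTail_zero_right, depTail, binomTail_one]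
  linarith

theorem activeCdf_of_lt (p q : ℝ) {y i : ℕ} (h : y < i) : activeCdf p q y i = 1 := by
  rw [activeCdf, Nat.sub_eq_zero_of_le h, Nat.sub_eq_zero_of_le h.le, depTail_zero_right]
  ring

theorem activeCdf_succ_le (hp0 : 0 ≤ p) (hp1 : p ≤ 1) (hq0 : 0 ≤ q) (hq1 : q ≤ 1) {y i : ℕ}
    (h : i ≤ y) : activeCdf p q (y + 1) i ≤ activeCdf p q y i := by
  rw [activeCdf, activeCdf, show y + 1 + 1 - i = y + 1 - i + 1 by omega,
    show y + 1 - i = y - i + 1 by omega]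
  have := depTail_succ_succ_le hq0 hq1 y (y - i + 1)
  have := depTail_succ_succ_le hq0 hq1 y (y - i)
  have : 0 ≤ 1 - p := sub_nonneg.2 hp1
  gcongr

theorem sum_range_activeCdf (p q : ℝ) (y : ℕ) :
    ∑ i ∈ range (y + 1), activeCdf p q y i = 1 - p + y * (q / y) := by
  have hdown : ∑ i ∈ range (y + 1), depTail q y (y - i) = 1 + y * (q / y) := by
    rw [sum_range_succ, sum_range_depTail_sub, Nat.sub_self, depTail_zero_right, add_comm]
  have hup : ∑ i ∈ range (y + 1), depTail q y (y + 1 - i) = y * (q / y) := by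
    rw [sum_range_succ', ← sum_range_depTail_sub, depTail, binomTail_of_lt (by omega), add_zero]
    simp only [Nat.add_sub_add_right]
  simp only [activeCdf, sum_add_distrib, ← mul_sum, hdown, hup]
  ring

end ActiveCdf

theorem Finset.sum_mul_le_sum_mul_add_sub_mul {ι R : Type*} [CommRing R] [PartialOrder R]
    [IsOrderedRing R] (s : Finset ι) {u v w : ι → R} {c : R} (huv : ∀ i ∈ s, v i ≤ u i)
    (hw : ∀ i ∈ s, w i ≤ c) :
    ∑ i ∈ s, u i * w i ≤ ∑ i ∈ s, v i * w i + (∑ i ∈ s, u i - ∑ i ∈ s, v i) * c := by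
  have h : ∑ i ∈ s, (u i - v i) * w i ≤ ∑ i ∈ s, (u i - v i) * c :=
    sum_le_sum fun i hi => mul_le_mul_of_nonneg_left (hw i hi) (sub_nonneg.2 (huv i hi))
  rw [← sub_nonneg] at h ⊢
  convert h using 1
  simp only [sub_mul, sum_sub_distrib, ← sum_mul]
  ring

/-- Mean passage time from `x` to `x + 1` when arrivals are always admitted. By first-step
analysis the chain must climb back through every level `i ≤ x` at or below which it lands, so
`W x = 1 + ∑_{i ≤ x} P(next ≤ i) W i`; the denominator is the probability of moving up. -/
noncomputable def passageTime (p q : ℝ) : ℕ → ℝ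
  | x => (1 + ∑ i : Fin x, activeCdf p q x i * passageTime p q i) / (1 - activeCdf p q x x)

section PassageTime

variable {p q : ℝ}

theorem passageTime_eq_one_add_sum (hp0 : 0 < p) (hq0 : 0 ≤ q) (hq1 : q < 1) (x : ℕ) :
    passageTime p q x = 1 + ∑ i ∈ range (x + 1), activeCdf p q x i * passageTime p q i := by
  have hden : 1 - activeCdf p q x x ≠ 0 := by linarith [activeCdf_self_lt_one hp0 hq0 hq1 x]
  have h : (1 - activeCdf p q x x) * passageTime p q x =
      1 + ∑ i : Fin x, activeCdf p q x i * passageTime p q i := by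
    rw [passageTime, mul_div_cancel₀ _ hden]
  rw [sum_range_succ, ← Fin.sum_univ_eq_sum_range (fun i => activeCdf p q x i * passageTime p q i)]
  linarith

theorem passageTime_nonneg (hp0 : 0 < p) (hp1 : p ≤ 1) (hq0 : 0 ≤ q) (hq1 : q < 1) (x : ℕ) :
    0 ≤ passageTime p q x := by
  induction x using Nat.strong_induction_on with
  | _ x ih =>
    rw [passageTime]
    have := activeCdf_self_lt_one hp0 hq0 hq1 x
    refine div_nonneg (add_nonneg zero_le_one (sum_nonneg fun i _ => ?_)) (by linarith)
    exact mul_nonneg (activeCdf_nonneg hp0.le hp1 hq0 hq1.le _ _) (ih i i.isLt)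

theorem passageTime_le_succ (hp0 : 0 < p) (hp1 : p ≤ 1) (hq0 : 0 ≤ q) (hq1 : q < 1) {x : ℕ}
    (hmono : ∀ i ≤ x, passageTime p q i ≤ passageTime p q x) :
    passageTime p q x ≤ passageTime p q (x + 1) := by
  have ha : activeCdf p q (x + 1) (x + 1) < 1 := activeCdf_self_lt_one hp0 hq0 hq1 (x + 1)
  have hW := passageTime_eq_one_add_sum hp0 hq0 hq1 x
  have hW' := passageTime_eq_one_add_sum hp0 hq0 hq1 (x + 1)
  rw [sum_range_succ _ (x + 1)] at hW'
  have hsum := sum_range_activeCdf p q x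
  have hsum' := sum_range_activeCdf p q (x + 1)
  rw [sum_range_succ, Nat.cast_add_one, mul_div_cancel₀ q (by positivity)] at hsum'
  have habel := sum_mul_le_sum_mul_add_sub_mul (range (x + 1))
    (w := passageTime p q) (c := passageTime p q x)
    (fun i hi => activeCdf_succ_le hp0.le hp1 hq0 hq1.le (Nat.lt_succ_iff.1 (mem_range.1 hi)))
    (fun i hi => hmono i (Nat.lt_succ_iff.1 (mem_range.1 hi)))
  have hdrift : (x * (q / x) - q) * passageTime p q x ≤ 0 :=
    mul_nonpos_of_nonpos_of_nonneg (by linarith [natCast_mul_div_le_self hq0 x])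
      (passageTime_nonneg hp0 hp1 hq0 hq1 x)
  have : (1 - activeCdf p q (x + 1) (x + 1)) * passageTime p q x ≤
      (1 - activeCdf p q (x + 1) (x + 1)) * passageTime p q (x + 1) := by
    rw [hsum, show ∑ i ∈ range (x + 1), activeCdf p q (x + 1) i =
      1 - p + q - activeCdf p q (x + 1) (x + 1) by linarith] at habel
    linarith
  exact le_of_mul_le_mul_left this (by linarith)

theorem passageTime_monotone (hp0 : 0 < p) (hp1 : p ≤ 1) (hq0 : 0 ≤ q) (hq1 : q < 1) :
    Monotone (passageTime p q) := by
  have h : ∀ n, ∀ i ≤ n, passageTime p q i ≤ passageTime p q n := by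
    intro n
    induction n with
    | zero => intro i hi; rw [Nat.le_zero.1 hi]
    | succ n ih =>
      intro i hi
      rcases Nat.le_succ_iff.1 hi with hi | rfl
      · exact (ih i hi).trans (passageTime_le_succ hp0 hp1 hq0 hq1 ih)
      · exact le_rfl
  exact fun i n hin => h n i hin

end PassageTime

/-- Mean return time to a passive state `y`: one step down to `y - D`, then the passages
`i → i + 1` for `y - D ≤ i < y`. -/
noncomputable def returnTime (p q : ℝ) (y : ℕ) : ℝ :=
  1 + ∑ i ∈ range y, depTail q y (y - i) * passageTime p q i

section ReturnTime

variable {p q : ℝ}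

theorem one_le_returnTime (hp0 : 0 < p) (hp1 : p ≤ 1) (hq0 : 0 ≤ q) (hq1 : q < 1) (y : ℕ) :
    1 ≤ returnTime p q y :=
  le_add_of_nonneg_right <| sum_nonneg fun i _ =>
    mul_nonneg (depTail_nonneg hq0 hq1.le _ _) (passageTime_nonneg hp0 hp1 hq0 hq1 i)

theorem returnTime_le_succ (hp0 : 0 < p) (hp1 : p ≤ 1) (hq0 : 0 ≤ q) (hq1 : q < 1) (y : ℕ) :
    returnTime p q y ≤ returnTime p q (y + 1) := by
  have habel := sum_mul_le_sum_mul_add_sub_mul (range y)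
    (u := fun i => depTail q y (y - i)) (v := fun i => depTail q (y + 1) (y + 1 - i))
    (w := passageTime p q) (c := passageTime p q y)
    (fun i hi => by
      simpa [show y + 1 - i = y - i + 1 by have := mem_range.1 hi; omega]
        using depTail_succ_succ_le hq0 hq1.le y (y - i))
    (fun i hi => passageTime_monotone hp0 hp1 hq0 hq1 (mem_range.1 hi).le)
  have hsum' := sum_range_depTail_sub q (y + 1)
  rw [sum_range_succ, Nat.cast_add_one, mul_div_cancel₀ q (by positivity),
    Nat.add_sub_cancel_left] at hsum'
  have hdrift : (y * (q / y) - q) * passageTime p q y ≤ 0 :=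
    mul_nonpos_of_nonpos_of_nonneg (by linarith [natCast_mul_div_le_self hq0 y])
      (passageTime_nonneg hp0 hp1 hq0 hq1 y)
  rw [sum_range_depTail_sub, show ∑ i ∈ range y, depTail q (y + 1) (y + 1 - i) =
    q - depTail q (y + 1) 1 by linarith] at habel
  rw [returnTime, returnTime, sum_range_succ, Nat.add_sub_cancel_left]
  linarith

end ReturnTime

/-- Mean time to reach `m + 1` from `z ≤ m + 1` when arrivals are always admitted. -/
noncomputable def hittingTime (p q : ℝ) (m z : ℕ) : ℝ :=
  ∑ i ∈ Ico z (m + 1), passageTime p q i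

section Kernel

variable {p q : ℝ}

theorem sum_thresholdKernel_mul_of_le {m y : ℕ} (hy : y ≤ m) (f : ℕ → ℝ) :
    ∑ j ∈ range (m + 2), thresholdKernel p q m y j * f j =
      ∑ d ∈ range (y + 1), depWeight q y d * (p * f (y - d + 1) + (1 - p) * f (y - d)) := by
  simp only [thresholdKernel, if_pos hy, sum_mul]
  rw [sum_comm]
  refine sum_congr rfl fun d hd => ?_
  rw [mem_range] at hd
  simp only [mul_add, add_mul, sum_add_distrib, mul_assoc, ite_mul, one_mul, zero_mul, ← mul_sum,
    sum_ite_eq, mem_range, if_pos (show y - d + 1 < m + 2 by omega),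
    if_pos (show y - d < m + 2 by omega)]

theorem sum_thresholdKernel_succ_mul (m : ℕ) (f : ℕ → ℝ) :
    ∑ j ∈ range (m + 2), thresholdKernel p q m (m + 1) j * f j =
      ∑ d ∈ range (m + 2), depWeight q (m + 1) d * f (m + 1 - d) := by
  simp only [thresholdKernel, if_neg (show ¬m + 1 ≤ m by omega), sum_mul]
  rw [sum_comm]
  refine sum_congr rfl fun d hd => ?_
  rw [mem_range] at hd
  simp only [mul_assoc, ite_mul, one_mul, zero_mul, ← mul_sum, sum_ite_eq, mem_range,
    if_pos (show m + 1 - d < m + 2 by omega)]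

theorem sum_thresholdKernel_mul_hittingTime (p q : ℝ) (m y : ℕ) :
    ∑ j ∈ range (m + 2), thresholdKernel p q m y j * hittingTime p q m j =
      ∑ i ∈ range (m + 1), (∑ j ∈ range (m + 2), thresholdKernel p q m y j *
        (if j ≤ i then 1 else 0)) * passageTime p q i := by
  have hT : ∀ j, hittingTime p q m j =
      ∑ i ∈ range (m + 1), (if j ≤ i then 1 else 0) * passageTime p q i := by
    intro j
    rw [hittingTime, range_eq_Ico]
    simp only [ite_mul, one_mul, zero_mul]
    rw [← sum_filter]
    congr 1; ext i; simp [and_comm]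
  simp only [hT, mul_sum, sum_mul, mul_assoc]
  exact sum_comm

theorem sum_thresholdKernel_mul_hittingTime_of_le (hp0 : 0 < p) (hq0 : 0 ≤ q) (hq1 : q < 1)
    {m y : ℕ} (hy : y ≤ m) :
    ∑ j ∈ range (m + 2), thresholdKernel p q m y j * hittingTime p q m j =
      hittingTime p q m y - 1 := by
  have hcdf : ∀ i, ∑ j ∈ range (m + 2), thresholdKernel p q m y j * (if j ≤ i then 1 else 0) =
      activeCdf p q y i := by
    intro i
    have h0 := sum_depWeight_mul_indicator q y 0 i
    simp only [add_zero] at h0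
    rw [sum_thresholdKernel_mul_of_le hy, activeCdf, ← h0, ← sum_depWeight_mul_indicator q y 1 i,
      mul_sum, mul_sum, ← sum_add_distrib]
    exact sum_congr rfl fun d _ => by ring
  rw [sum_thresholdKernel_mul_hittingTime]
  simp only [hcdf]
  have htop : ∑ i ∈ Ico (y + 1) (m + 1), activeCdf p q y i * passageTime p q i =
      ∑ i ∈ Ico (y + 1) (m + 1), passageTime p q i :=
    sum_congr rfl fun i hi => by rw [activeCdf_of_lt p q (mem_Ico.1 hi).1, one_mul]
  rw [← sum_range_add_sum_Ico _ (show y + 1 ≤ m + 1 by omega), htop, hittingTime,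
    sum_eq_sum_Ico_succ_bot (show y < m + 1 by omega)]
  linarith [passageTime_eq_one_add_sum hp0 hq0 hq1 y]

theorem sum_thresholdKernel_succ_mul_hittingTime (p q : ℝ) (m : ℕ) :
    ∑ j ∈ range (m + 2), thresholdKernel p q m (m + 1) j * hittingTime p q m j =
      returnTime p q (m + 1) - 1 := by
  have hcdf : ∀ i, ∑ j ∈ range (m + 2), thresholdKernel p q m (m + 1) j *
      (if j ≤ i then 1 else 0) = depTail q (m + 1) (m + 1 - i) := by
    intro i
    rw [sum_thresholdKernel_succ_mul]
    simpa using sum_depWeight_mul_indicator q (m + 1) 0 i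
  rw [sum_thresholdKernel_mul_hittingTime, returnTime]
  simp only [hcdf]
  ring

end Kernel

theorem stationary_mul_returnTime {p q : ℝ} (hp0 : 0 < p) (hq0 : 0 ≤ q) (hq1 : q < 1) (m : ℕ)
    (π : ℕ → ℝ) (hsum : ∑ j ∈ range (m + 2), π j = 1)
    (hstat : ∀ j, ∑ y ∈ range (m + 2), π y * thresholdKernel p q m y j = π j) :
    π (m + 1) * returnTime p q (m + 1) = 1 := by
  have hbalance : ∑ y ∈ range (m + 2), π y *
      ∑ j ∈ range (m + 2), thresholdKernel p q m y j * hittingTime p q m j =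
      ∑ j ∈ range (m + 2), π j * hittingTime p q m j := by
    simp only [mul_sum, ← mul_assoc]
    rw [sum_comm]
    exact sum_congr rfl fun j _ => by rw [← sum_mul, hstat]
  rw [sum_range_succ, sum_range_succ (fun j => π j * hittingTime p q m j),
    sum_thresholdKernel_succ_mul_hittingTime,
    sum_congr rfl fun y hy => by
      rw [sum_thresholdKernel_mul_hittingTime_of_le hp0 hq0 hq1
        (Nat.lt_succ_iff.1 (mem_range.1 hy))],
    hittingTime, Ico_self, sum_empty] at hbalance
  rw [sum_range_succ] at hsum
  simp only [mul_sub, mul_one, sum_sub_distrib] at hbalance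
  linarith

theorem stationary_active_mass_monotone_general (p q : ℝ) (hp0 : 0 < p) (hp1 : p < 1)
    (hq0 : 0 < q) (hq1 : q < 1) (k : ℕ)
    (π π' : ℕ → ℝ)
    (hπ_sum : ∑ j ∈ Finset.range (k + 2), π j = 1)
    (hπ'_sum : ∑ j ∈ Finset.range (k + 3), π' j = 1)
    (hπ_stat : ∀ j, ∑ y ∈ Finset.range (k + 2), π y * thresholdKernel p q k y j = π j)
    (hπ'_stat : ∀ j, ∑ y ∈ Finset.range (k + 3), π' y * thresholdKernel p q (k + 1) y j = π' j) :
    π' (k + 2) ≤ π (k + 1) ∧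
    ∑ j ∈ Finset.range (k + 1), π j ≤ ∑ j ∈ Finset.range (k + 2), π' j := by
  have hR := stationary_mul_returnTime hp0 hq0.le hq1 k π hπ_sum hπ_stat
  have hR' := stationary_mul_returnTime hp0 hq0.le hq1 (k + 1) π' hπ'_sum hπ'_stat
  have hpassive : π' (k + 2) ≤ π (k + 1) := by
    rw [eq_one_div_of_mul_eq_one_left hR, eq_one_div_of_mul_eq_one_left hR']
    exact one_div_le_one_div_of_le (by linarith [one_le_returnTime hp0 hp1.le hq0.le hq1 (k + 1)])
      (returnTime_le_succ hp0 hp1.le hq0.le hq1 (k + 1))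
  refine ⟨hpassive, ?_⟩
  rw [sum_range_succ] at hπ_sum hπ'_sum
  linarith

/-- Lemma 5 of the paper: the stationary probability of the single passive recurrent
state decreases as the threshold increases, hence the stationary mass of the set of
active states is nondecreasing in the threshold. -/
theorem stationary_active_mass_monotone (p q : ℝ) (hp0 : 0 < p) (hp1 : p < 1)
    (hq0 : 0 < q) (hq1 : q < 1) (k : ℕ)
    (π π' : ℕ → ℝ)
    (hπ_nonneg : ∀ j, 0 ≤ π j) (hπ'_nonneg : ∀ j, 0 ≤ π' j)
    (hπ_supp : ∀ j, k + 1 < j → π j = 0) (hπ'_supp : ∀ j, k + 2 < j → π' j = 0)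
    (hπ_sum : ∑ j ∈ Finset.range (k + 2), π j = 1)
    (hπ'_sum : ∑ j ∈ Finset.range (k + 3), π' j = 1)
    (hπ_stat : ∀ j, ∑ y ∈ Finset.range (k + 2), π y * thresholdKernel p q k y j = π j)
    (hπ'_stat : ∀ j, ∑ y ∈ Finset.range (k + 3), π' y * thresholdKernel p q (k + 1) y j = π' j) :
    π' (k + 2) ≤ π (k + 1) ∧
    ∑ j ∈ Finset.range (k + 1), π j ≤ ∑ j ∈ Finset.range (k + 2), π' j :=
  stationary_active_mass_monotone_general p q hp0 hp1 hq0 hq1 k π π' hπ_sum hπ'_sum hπ_stat hπ'_stat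
end
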